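/- arXiv:1111.4849 — 2 statements merged into one kernel-verified Lean document; each statement's English description precedes it below -/
import Mathlib

section
/- (Degree evaluation formula) Let 0 < q < 1, w ≥ 1, m ∈ ℕ, and for i = 1,…,w let n_i ∈ ℕ with m ≤ n_i and x_i ∈ [0,1]. Then ( ∏_{i=1}^{w} [x_i]_q )^m = ∏_{i=1}^{w} ( [1−x_i]_q + [x_i]_q )^{−(n_i−m)} · Σ_{k₁=m}^{n₁} Σ_{k₂=m}^{n₂} ⋯ Σ_{k_w=m}^{n_w} ∏_{i=1}^{w} ( C(k_i,m)/C(n_i,m) ) · B_{k₁,…,k_w; n₁,…,n_w}(x₁,…,x_w; q). -/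
/-!
The sum over the box `∏ᵢ [m, nᵢ]` of a product of coordinatewise factors is the product of the
one-variable sums, so it suffices to treat `w = 1`. There, with `a = [x]_q` and `b = [1-x]_q`,
the identity `C(n,k) C(k,m) = C(n,m) C(n-m,k-m)` and the binomial theorem give
`∑ₖ C(k,m)/C(n,m) · C(n,k) aᵏ bⁿ⁻ᵏ = aᵐ (a+b)ⁿ⁻ᵐ`, and `a + b > 0` lets the prefactor cancel.
-/

open Finset

/-- The `q`-number `[x]_q = (1 - q^x)/(1 - q)` (real exponent). -/
noncomputable def qnum (q x : ℝ) : ℝ := (1 - q ^ x) / (1 - q)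

/-- The modified `q`-Bernstein polynomial
`B_{k,n}(x;q) = C(n,k) [x]_q^k [1-x]_q^(n-k)`. -/
noncomputable def qBern (q : ℝ) (k n : ℕ) (x : ℝ) : ℝ :=
  (n.choose k : ℝ) * qnum q x ^ k * qnum q (1 - x) ^ (n - k)

theorem sum_Icc_choose_mul_choose_mul_pow_mul_pow {R : Type*} [CommSemiring R]
    (a b : R) (m n : ℕ) :
    ∑ k ∈ Icc m n, ((n.choose k * k.choose m : ℕ) : R) * a ^ k * b ^ (n - k) =
      n.choose m * (a ^ m * (a + b) ^ (n - m)) := by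
  obtain h | h := le_or_gt m n
  swap
  · simp [Icc_eq_empty_of_lt h, Nat.choose_eq_zero_of_lt h]
  have hIcc : Icc m n = (range (n - m + 1)).map (addLeftEmbedding m) := by
    rw [Nat.range_succ_eq_Icc_zero, map_add_left_Icc, add_zero, Nat.add_sub_cancel' h]
  rw [hIcc, sum_map, add_pow, mul_sum, mul_sum]
  refine sum_congr rfl fun j hj => ?_
  have hj : j ≤ n - m := Nat.lt_succ_iff.mp (mem_range.mp hj)
  rw [addLeftEmbedding_apply, Nat.choose_mul (Nat.le_add_right m j), Nat.add_sub_cancel_left,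
    show n - (m + j) = n - m - j by omega, pow_add]
  push_cast
  ring

theorem sum_Icc_choose_div_choose_mul_choose_mul_pow_mul_pow {K : Type*} [Field K]
    [CharZero K] (a b : K) {m n : ℕ} (h : m ≤ n) :
    ∑ k ∈ Icc m n, ((k.choose m : K) / n.choose m) * (n.choose k * a ^ k * b ^ (n - k)) =
      a ^ m * (a + b) ^ (n - m) := by
  have hC : (n.choose m : K) ≠ 0 := Nat.cast_ne_zero.mpr (Nat.choose_pos h).ne'
  rw [← mul_right_inj' hC, ← sum_Icc_choose_mul_choose_mul_pow_mul_pow a b m n, mul_sum]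
  refine sum_congr rfl fun k _ => ?_
  push_cast
  field_simp

theorem qnum_nonneg {q x : ℝ} (hq0 : 0 ≤ q) (hq1 : q < 1) (hx : 0 ≤ x) : 0 ≤ qnum q x :=
  div_nonneg (sub_nonneg.mpr (Real.rpow_le_one hq0 hq1.le hx)) (sub_pos.mpr hq1).le

theorem qnum_pos {q x : ℝ} (hq0 : 0 ≤ q) (hq1 : q < 1) (hx : 0 < x) : 0 < qnum q x :=
  div_pos (sub_pos.mpr (Real.rpow_lt_one hq0 hq1 hx)) (sub_pos.mpr hq1)

theorem qnum_one_sub_add_qnum_pos {q x : ℝ} (hq0 : 0 ≤ q) (hq1 : q < 1)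
    (hx : x ∈ Set.Icc (0 : ℝ) 1) : 0 < qnum q (1 - x) + qnum q x := by
  have h₁ := qnum_nonneg hq0 hq1 (sub_nonneg.mpr hx.2)
  have h₂ := qnum_nonneg hq0 hq1 hx.1
  rcases hx.1.eq_or_lt with rfl | hx0
  · linarith [qnum_pos hq0 hq1 (sub_pos.mpr zero_lt_one)]
  · linarith [qnum_pos hq0 hq1 hx0]

theorem qnum_pow_eq_zpow_mul_sum_qBern {q x : ℝ} (hq0 : 0 ≤ q) (hq1 : q < 1)
    (hx : x ∈ Set.Icc (0 : ℝ) 1) {m n : ℕ} (h : m ≤ n) :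
    qnum q x ^ m = (qnum q (1 - x) + qnum q x) ^ (-((n : ℤ) - m)) *
      ∑ k ∈ Icc m n, ((k.choose m : ℝ) / n.choose m) * qBern q k n x := by
  have hs := (qnum_one_sub_add_qnum_pos hq0 hq1 hx).ne'
  simp only [qBern]
  rw [sum_Icc_choose_div_choose_mul_choose_mul_pow_mul_pow _ _ h, add_comm (qnum q x),
    ← Nat.cast_sub h, zpow_neg, zpow_natCast, mul_comm (qnum q x ^ m),
    inv_mul_cancel_left₀ (pow_ne_zero _ hs)]

theorem modified_qBernstein_degree_evaluation_general
    (q : ℝ) (hq0 : 0 < q) (hq1 : q < 1)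
    (w : ℕ) (m : ℕ) (n : Fin w → ℕ) (hn : ∀ i, m ≤ n i)
    (x : Fin w → ℝ) (hx : ∀ i, x i ∈ Set.Icc (0 : ℝ) 1) :
    (∏ i, qnum q (x i)) ^ m =
      (∏ i, (qnum q (1 - x i) + qnum q (x i)) ^ (-((n i : ℤ) - (m : ℤ)))) *
        ∑ k ∈ Finset.Icc (fun _ => m : Fin w → ℕ) n,
          ∏ i, (((k i).choose m : ℝ) / ((n i).choose m : ℝ)) *
            qBern q (k i) (n i) (x i) := by
  rw [Pi.Icc_eq, ← prod_univ_sum (fun i => Icc m (n i))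
      fun i k => ((k.choose m : ℝ) / (n i).choose m) * qBern q k (n i) (x i),
    ← prod_mul_distrib, ← prod_pow]
  exact prod_congr rfl fun i _ => qnum_pow_eq_zpow_mul_sum_qBern hq0.le hq1 (hx i) (hn i)

/-- Degree evaluation formula: `(∏ᵢ [xᵢ]_q)^m` as a linear combination of
modified `q`-Bernstein polynomials of several variables. -/
theorem modified_qBernstein_degree_evaluation
    (q : ℝ) (hq0 : 0 < q) (hq1 : q < 1)
    (w : ℕ) (hw : 1 ≤ w) (m : ℕ) (n : Fin w → ℕ) (hn : ∀ i, m ≤ n i)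
    (x : Fin w → ℝ) (hx : ∀ i, x i ∈ Set.Icc (0 : ℝ) 1) :
    (∏ i, qnum q (x i)) ^ m =
      (∏ i, (qnum q (1 - x i) + qnum q (x i)) ^ (-((n i : ℤ) - (m : ℤ)))) *
        ∑ k ∈ Finset.Icc (fun _ => m : Fin w → ℕ) n,
          ∏ i, (((k i).choose m : ℝ) / ((n i).choose m : ℝ)) *
            qBern q (k i) (n i) (x i) :=
  modified_qBernstein_degree_evaluation_general q hq0 hq1 w m n hn x hx
end

section
/- Let 0 < q < 1, w ≥ 1, m ∈ ℕ, and x₁,…,x_w ∈ ℝ. Then ( ∏_{i=1}^{w} [x_i]_q )^m = Σ_{l₁=0}^{m} Σ_{l₂=0}^{m} ⋯ Σ_{l_w=0}^{m} q^{Σ_{i=1}^{w} C(l_i,2)} · ∏_{i=1}^{w} binom(x_i, l_i)_q · [l_i]_q! · S(m, l_i; q). -/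
open Finset

/-- The `q`-factorial `[n]_q! = [1]_q [2]_q ⋯ [n]_q`. -/
noncomputable def qfac (q : ℝ) (n : ℕ) : ℝ :=
  ∏ j ∈ Finset.range n, qnum q ((j : ℝ) + 1)

/-- The Gaussian binomial coefficient `binom(n,k)_q = [n]_q!/([k]_q!·[n−k]_q!)`. -/
noncomputable def qbinom (q : ℝ) (n k : ℕ) : ℝ :=
  qfac q n / (qfac q k * qfac q (n - k))

/-- The Gaussian binomial coefficient with real upper argument,
`binom(x,k)_q = ([x]_q [x−1]_q ⋯ [x−k+1]_q)/[k]_q!`. -/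
noncomputable def qbinomR (q x : ℝ) (k : ℕ) : ℝ :=
  (∏ j ∈ Finset.range k, qnum q (x - (j : ℝ))) / qfac q k

/-- The `q`-extension of the second kind Stirling numbers,
`S(n,k;q) = (q^{−C(k,2)}/[k]_q!) Σ_{i=0}^{k} (−1)^i q^{C(i,2)} binom(k,i)_q [k−i]_q^n`. -/
noncomputable def qStirling (q : ℝ) (n k : ℕ) : ℝ :=
  ((q ^ k.choose 2)⁻¹ / qfac q k) *
    ∑ i ∈ Finset.range (k + 1),
      (-1 : ℝ) ^ i * q ^ i.choose 2 * qbinom q k i * qnum q ((k - i : ℕ) : ℝ) ^ n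

/-!
Both sides factor over `i`, so it suffices to expand a single power `[x]_q^m`. Put `t = [x]_q`.
Since `q^j [x-j]_q = [x]_q - [j]_q`, the coefficient `q^{C(l,2)} binom(x,l)_q [l]_q!` equals
`∏_{j<l} (t - [j]_q)`, and the claim becomes the polynomial identity
`t^m = Σ_{l ≤ m} S(m,l;q) ∏_{j<l} (t - [j]_q)`. It follows by induction on `m` from
`t ∏_{j<l} (t - [j]_q) = [l]_q ∏_{j<l} (t - [j]_q) + ∏_{j<l+1} (t - [j]_q)`, because `S` satisfies
`S(m+1,k+1;q) = S(m,k;q) + [k+1]_q S(m,k+1;q)` and vanishes for `k > m`; the vanishing reduces to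
the alternating sum `Σ_i (-1)^i q^{C(i,2)} binom(k,i)_q = 0` for `k ≥ 1`.
-/

section QCalculus

variable {q : ℝ}

@[simp]
lemma qnum_zero : qnum q 0 = 0 := by
  simp [qnum]

lemma qnum_add (hq : 0 < q) (x y : ℝ) : qnum q (x + y) = qnum q x + q ^ x * qnum q y := by
  simp only [qnum, Real.rpow_add hq]
  ring

lemma qnum_natCast_add (hq : 0 < q) (n : ℕ) (y : ℝ) :
    qnum q (n + y) = qnum q n + q ^ n * qnum q y := by
  rw [qnum_add hq, Real.rpow_natCast]

lemma qnum_natCast_sub (hq : 0 < q) {i k : ℕ} (h : i ≤ k) :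
    qnum q (k - i : ℕ) = qnum q k - q ^ (k - i) * qnum q i := by
  have hk := qnum_natCast_add hq (k - i) i
  rw [← Nat.cast_add, Nat.sub_add_cancel h] at hk
  linarith

lemma qnum_natCast_eq_sum_pow (hq : q ≠ 1) (n : ℕ) : qnum q n = ∑ i ∈ range n, q ^ i := by
  have h₁ : 1 - q ≠ 0 := sub_ne_zero.mpr hq.symm
  have h₂ : q - 1 ≠ 0 := sub_ne_zero.mpr hq
  rw [geom_sum_eq hq, qnum, Real.rpow_natCast]
  field_simp
  ring

lemma qnum_natCast_add_one_pos (hq0 : 0 < q) (hq1 : q ≠ 1) (n : ℕ) : 0 < qnum q (n + 1) := by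
  rw [← Nat.cast_succ, qnum_natCast_eq_sum_pow hq1]
  exact sum_pos (fun i _ => pow_pos hq0 i) nonempty_range_add_one

lemma qfac_succ (n : ℕ) : qfac q (n + 1) = qfac q n * qnum q (n + 1) :=
  prod_range_succ _ _

lemma qfac_ne_zero (hq0 : 0 < q) (hq1 : q ≠ 1) (n : ℕ) : qfac q n ≠ 0 :=
  prod_ne_zero_iff.mpr fun j _ => (qnum_natCast_add_one_pos hq0 hq1 j).ne'

noncomputable def qDescFactorial (q x : ℝ) (k : ℕ) : ℝ :=
  ∏ j ∈ range k, qnum q (x - j)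

lemma qbinomR_eq_qDescFactorial_div (x : ℝ) (k : ℕ) :
    qbinomR q x k = qDescFactorial q x k / qfac q k :=
  rfl

lemma qDescFactorial_succ (x : ℝ) (k : ℕ) :
    qDescFactorial q x (k + 1) = qDescFactorial q x k * qnum q (x - k) :=
  prod_range_succ _ _

lemma qDescFactorial_succ_eq_qnum_mul (x : ℝ) (k : ℕ) :
    qDescFactorial q x (k + 1) = qnum q x * qDescFactorial q (x - 1) k := by
  simp only [qDescFactorial, prod_range_succ', Nat.cast_zero, sub_zero, Nat.cast_succ,
    sub_add_eq_sub_sub_swap]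
  ring

lemma qDescFactorial_add (x : ℝ) (a b : ℕ) :
    qDescFactorial q x (a + b) = qDescFactorial q x a * qDescFactorial q (x - a) b := by
  simp only [qDescFactorial, prod_range_add, Nat.cast_add, sub_add_eq_sub_sub]

lemma qDescFactorial_natCast_self (n : ℕ) : qDescFactorial q n n = qfac q n := by
  induction n with
  | zero => simp [qDescFactorial, qfac]
  | succ n ih =>
    rw [qDescFactorial_succ_eq_qnum_mul, Nat.cast_succ, add_sub_cancel_right, ih, qfac_succ,
      mul_comm]

lemma qbinomR_zero (x : ℝ) : qbinomR q x 0 = 1 := by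
  simp [qbinomR, qfac]

lemma qbinomR_natCast_succ_self (n : ℕ) : qbinomR q n (n + 1) = 0 := by
  rw [qbinomR_eq_qDescFactorial_div, qDescFactorial_succ, sub_self, qnum_zero, mul_zero, zero_div]

lemma qbinomR_natCast (hq0 : 0 < q) (hq1 : q ≠ 1) {n k : ℕ} (h : k ≤ n) :
    qbinomR q n k = qbinom q n k := by
  obtain ⟨j, rfl⟩ := Nat.exists_eq_add_of_le h
  have hfac : qfac q (k + j) = qDescFactorial q (k + j : ℕ) k * qfac q j := by
    rw [← qDescFactorial_natCast_self, Nat.cast_add, qDescFactorial_add, add_sub_cancel_left,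
      qDescFactorial_natCast_self]
  have := qfac_ne_zero hq0 hq1 j
  rw [qbinom, Nat.add_sub_cancel_left, hfac, qbinomR_eq_qDescFactorial_div]
  field_simp

lemma qbinomR_succ (hq0 : 0 < q) (hq1 : q ≠ 1) (x : ℝ) (k : ℕ) :
    qbinomR q x (k + 1) = qbinomR q (x - 1) k + q ^ (k + 1) * qbinomR q (x - 1) (k + 1) := by
  have hsplit := qnum_natCast_add hq0 (k + 1) (x - 1 - k)
  rw [show ((k + 1 : ℕ) : ℝ) + (x - 1 - k) = x by push_cast; ring, Nat.cast_succ] at hsplit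
  have := qfac_ne_zero hq0 hq1 k
  have := (qnum_natCast_add_one_pos hq0 hq1 k).ne'
  rw [qbinomR_eq_qDescFactorial_div, qbinomR_eq_qDescFactorial_div, qbinomR_eq_qDescFactorial_div,
    qDescFactorial_succ_eq_qnum_mul, hsplit, qDescFactorial_succ (x - 1), qfac_succ]
  field_simp

lemma alternating_sum_qbinomR (hq0 : 0 < q) (hq1 : q ≠ 1) (x : ℝ) (n : ℕ) :
    ∑ i ∈ range (n + 1), (-1) ^ i * q ^ i.choose 2 * qbinomR q x i =
      (-1) ^ n * q ^ (n + 1).choose 2 * qbinomR q (x - 1) n := by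
  induction n with
  | zero => simp [qbinomR_zero]
  | succ n ih =>
    rw [sum_range_succ, ih, qbinomR_succ hq0 hq1, Nat.choose_succ_succ' (n + 1),
      Nat.choose_one_right]
    ring

-- `qbinom q n i` is junk for `i > n` (truncated subtraction), hence the detour through `qbinomR`.
lemma alternating_sum_qbinom_eq_zero (hq0 : 0 < q) (hq1 : q ≠ 1) (n : ℕ) :
    ∑ i ∈ range (n + 2), (-1) ^ i * q ^ i.choose 2 * qbinom q (n + 1) i = 0 :=
  calc ∑ i ∈ range (n + 2), (-1) ^ i * q ^ i.choose 2 * qbinom q (n + 1) i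
      = ∑ i ∈ range (n + 2), (-1) ^ i * q ^ i.choose 2 * qbinomR q (n + 1 : ℕ) i :=
        sum_congr rfl fun i hi => by
          rw [qbinomR_natCast hq0 hq1 (Nat.lt_succ_iff.mp (mem_range.mp hi))]
    _ = 0 := by
        rw [alternating_sum_qbinomR hq0 hq1, Nat.cast_succ, add_sub_cancel_right,
          qbinomR_natCast_succ_self, mul_zero]

lemma qbinom_succ_mul_qnum (hq0 : 0 < q) (hq1 : q ≠ 1) (k j : ℕ) :
    qbinom q (k + 1) (j + 1) * qnum q (j + 1) = qnum q (k + 1) * qbinom q k j := by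
  have := qfac_ne_zero hq0 hq1 j
  have := qfac_ne_zero hq0 hq1 (k - j)
  have := (qnum_natCast_add_one_pos hq0 hq1 j).ne'
  rw [qbinom, qbinom, Nat.add_sub_add_right, qfac_succ, qfac_succ]
  field_simp

noncomputable def qStirlingSum (q : ℝ) (n k : ℕ) : ℝ :=
  ∑ i ∈ range (k + 1), (-1 : ℝ) ^ i * q ^ i.choose 2 * qbinom q k i * qnum q (k - i : ℕ) ^ n

lemma qStirling_eq_div (n k : ℕ) :
    qStirling q n k = qStirlingSum q n k / (q ^ k.choose 2 * qfac q k) := by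
  rw [qStirling, qStirlingSum]
  ring

lemma qStirlingSum_succ_succ (hq0 : 0 < q) (hq1 : q ≠ 1) (n k : ℕ) :
    qStirlingSum q (n + 1) (k + 1) =
      qnum q (k + 1) * qStirlingSum q n (k + 1) + q ^ k * qnum q (k + 1) * qStirlingSum q n k := by
  set c : ℕ → ℝ := fun i => (-1 : ℝ) ^ i * q ^ i.choose 2 * qbinom q (k + 1) i
  have hterm : ∀ i ∈ range (k + 2), c i * qnum q (k + 1 - i : ℕ) ^ (n + 1) =
      qnum q (k + 1) * (c i * qnum q (k + 1 - i : ℕ) ^ n) -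
        c i * qnum q i * q ^ (k + 1 - i) * qnum q (k + 1 - i : ℕ) ^ n := by
    intro i hi
    rw [pow_succ, qnum_natCast_sub hq0 (Nat.lt_succ_iff.mp (mem_range.mp hi)), Nat.cast_succ]
    ring
  -- the `i = 0` term of the correction vanishes since `[0]_q = 0`; shift `i = j + 1`
  have hcorr : ∑ i ∈ range (k + 2), c i * qnum q i * q ^ (k + 1 - i) * qnum q (k + 1 - i : ℕ) ^ n =
      -(q ^ k * qnum q (k + 1) * qStirlingSum q n k) := by
    rw [sum_range_succ', Nat.cast_zero, qnum_zero, mul_zero, zero_mul, zero_mul, add_zero,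
      qStirlingSum, mul_sum, ← sum_neg_distrib]
    refine sum_congr rfl fun j hj => ?_
    have hk : q ^ j * q ^ (k - j) = q ^ k := by
      rw [← pow_add, Nat.add_sub_cancel' (Nat.lt_succ_iff.mp (mem_range.mp hj))]
    have hb := qbinom_succ_mul_qnum hq0 hq1 k j
    simp only [c, Nat.cast_succ, Nat.add_sub_add_right, Nat.choose_succ_succ',
      Nat.choose_one_right, pow_succ, pow_add]
    linear_combination (-(-1 : ℝ) ^ j * q ^ j.choose 2 * q ^ (k - j) * q ^ j *
      qnum q (k - j : ℕ) ^ n) * hb - ((-1) ^ j * q ^ j.choose 2 * qnum q (k + 1) *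
      qbinom q k j * qnum q (k - j : ℕ) ^ n) * hk
  change ∑ i ∈ range (k + 2), c i * qnum q (k + 1 - i : ℕ) ^ (n + 1) = _
  rw [sum_congr rfl hterm, sum_sub_distrib, ← mul_sum, hcorr, sub_neg_eq_add]
  rfl

lemma qStirling_succ_succ (hq0 : 0 < q) (hq1 : q ≠ 1) (n k : ℕ) :
    qStirling q (n + 1) (k + 1) = qStirling q n k + qnum q (k + 1) * qStirling q n (k + 1) := by
  have := qfac_ne_zero hq0 hq1 k
  have := (qnum_natCast_add_one_pos hq0 hq1 k).ne'
  have := hq0.ne'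
  simp only [qStirling_eq_div, qStirlingSum_succ_succ hq0 hq1, qfac_succ, Nat.choose_succ_succ',
    Nat.choose_one_right, pow_add]
  field_simp
  ring

lemma qStirling_zero_zero : qStirling q 0 0 = 1 := by
  simp [qStirling, qbinom, qfac]

lemma qStirling_succ_zero (n : ℕ) : qStirling q (n + 1) 0 = 0 := by
  simp [qStirling]

lemma qStirling_zero_succ (hq0 : 0 < q) (hq1 : q ≠ 1) (k : ℕ) : qStirling q 0 (k + 1) = 0 := by
  rw [qStirling_eq_div, qStirlingSum]
  simp only [pow_zero, mul_one]
  rw [alternating_sum_qbinom_eq_zero hq0 hq1, zero_div]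

lemma qStirling_eq_zero_of_lt (hq0 : 0 < q) (hq1 : q ≠ 1) {n k : ℕ} (h : n < k) :
    qStirling q n k = 0 := by
  obtain ⟨k, rfl⟩ := Nat.exists_eq_add_one_of_ne_zero (Nat.ne_zero_of_lt h)
  induction n generalizing k with
  | zero => exact qStirling_zero_succ hq0 hq1 k
  | succ n ih =>
    obtain ⟨k, rfl⟩ := Nat.exists_eq_add_one_of_ne_zero (by omega : k ≠ 0)
    rw [qStirling_succ_succ hq0 hq1, ih k (by omega), ih (k + 1) (by omega), mul_zero, add_zero]

theorem pow_eq_sum_qStirling_mul_prod (hq0 : 0 < q) (hq1 : q ≠ 1) (t : ℝ) (m : ℕ) :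
    t ^ m = ∑ l ∈ range (m + 1), qStirling q m l * ∏ j ∈ range l, (t - qnum q j) := by
  induction m with
  | zero => simp [qStirling_zero_zero]
  | succ m ih =>
    set P : ℕ → ℝ := fun l => ∏ j ∈ range l, (t - qnum q j)
    have hP (l : ℕ) : t * P l = qnum q l * P l + P (l + 1) := by
      simp only [P, prod_range_succ]
      ring
    have hshift : ∑ l ∈ range (m + 1), qnum q l * qStirling q m l * P l =
        ∑ l ∈ range (m + 1), qnum q (l + 1) * qStirling q m (l + 1) * P (l + 1) := by
      have h := (sum_range_succ (fun l => qnum q l * qStirling q m l * P l) (m + 1)).symm.trans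
        (sum_range_succ' _ (m + 1))
      simpa [qStirling_eq_zero_of_lt hq0 hq1 (Nat.lt_succ_self m)] using h
    calc t ^ (m + 1)
        = ∑ l ∈ range (m + 1), (qnum q l * qStirling q m l * P l + qStirling q m l * P (l + 1)) := by
          rw [pow_succ', ih, mul_sum]
          exact sum_congr rfl fun l _ => by rw [mul_left_comm, hP]; ring
      _ = ∑ l ∈ range (m + 1),
            (qStirling q m l + qnum q (l + 1) * qStirling q m (l + 1)) * P (l + 1) := by
          rw [sum_add_distrib, hshift, ← sum_add_distrib]
          exact sum_congr rfl fun l _ => by ring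
      _ = ∑ l ∈ range (m + 2), qStirling q (m + 1) l * P l := by
          rw [sum_range_succ' _ (m + 1), qStirling_succ_zero, zero_mul, add_zero]
          simp only [qStirling_succ_succ hq0 hq1]

lemma pow_choose_two_mul_qDescFactorial (hq : 0 < q) (x : ℝ) (l : ℕ) :
    q ^ l.choose 2 * qDescFactorial q x l = ∏ j ∈ range l, (qnum q x - qnum q j) := by
  induction l with
  | zero => simp [qDescFactorial]
  | succ l ih =>
    have hsplit := qnum_natCast_add hq l (x - l)
    rw [add_sub_cancel] at hsplit
    rw [prod_range_succ, ← ih, qDescFactorial_succ, Nat.choose_succ_succ', Nat.choose_one_right]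
    linear_combination (-(q ^ l.choose 2 * qDescFactorial q x l)) * hsplit

theorem qnum_pow_eq_sum_qStirling (hq0 : 0 < q) (hq1 : q ≠ 1) (x : ℝ) (m : ℕ) :
    qnum q x ^ m =
      ∑ l ∈ range (m + 1), q ^ l.choose 2 * (qbinomR q x l * qfac q l * qStirling q m l) := by
  rw [pow_eq_sum_qStirling_mul_prod hq0 hq1 (qnum q x) m]
  refine sum_congr rfl fun l _ => ?_
  rw [← pow_choose_two_mul_qDescFactorial hq0, qbinomR_eq_qDescFactorial_div,
    div_mul_cancel₀ _ (qfac_ne_zero hq0 hq1 l)]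
  ring

end QCalculus

theorem qnum_prod_pow_eq_sum_qStirling_general
    (q : ℝ) (hq0 : 0 < q) (hq1 : q < 1)
    (w : ℕ) (m : ℕ) (x : Fin w → ℝ) :
    (∏ i, qnum q (x i)) ^ m =
      ∑ l ∈ Finset.Icc (0 : Fin w → ℕ) (fun _ => m),
        q ^ (∑ i, (l i).choose 2) *
          ∏ i, qbinomR q (x i) (l i) * qfac q (l i) * qStirling q m (l i) := by
  rw [Pi.Icc_eq, ← prod_pow]
  simp only [Pi.zero_apply, ← Nat.range_succ_eq_Icc_zero, qnum_pow_eq_sum_qStirling hq0 hq1.ne]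
  rw [prod_univ_sum]
  refine sum_congr rfl fun l _ => ?_
  rw [prod_mul_distrib, prod_pow_eq_pow_sum]

/-- Multivariate expansion of `(∏ᵢ [xᵢ]_q)^m` in terms of Gaussian binomial
coefficients and the `q`-extension of the second kind Stirling numbers. -/
theorem qnum_prod_pow_eq_sum_qStirling
    (q : ℝ) (hq0 : 0 < q) (hq1 : q < 1)
    (w : ℕ) (hw : 1 ≤ w) (m : ℕ) (x : Fin w → ℝ) :
    (∏ i, qnum q (x i)) ^ m =
      ∑ l ∈ Finset.Icc (0 : Fin w → ℕ) (fun _ => m),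
        q ^ (∑ i, (l i).choose 2) *
          ∏ i, qbinomR q (x i) (l i) * qfac q (l i) * qStirling q m (l i) :=
  qnum_prod_pow_eq_sum_qStirling_general q hq0 hq1 w m x
end
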